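/- Let ξ_1,…,ξ_N be i.i.d. N(0,1), X^1,…,X^N i.i.d. uniform on T², independent of the ξ's, and θ^N = N^{-1/2} Σ_n ξ_n δ_{X^n}. Then for every p ≥ 1 and δ > 0 there is a constant c_{p,δ} independent of N with E[‖θ^N‖^p_{H^{-1-δ}(T²)}] ≤ c_{p,δ}. -/

import Mathlib

open MeasureTheory Filter ProbabilityTheory
noncomputable section

/-- The plane `ℝ²`; the torus `𝕋² = ℝ²/ℤ²` is modelled by `ℤ²`-periodic functions on `E2`
together with the fundamental domain `Q2 = [0,1)²`. -/
abbrev E2 : Type := EuclideanSpace ℝ (Fin 2)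

/-- Fundamental domain `[0,1)²` of the torus. -/
def Q2 : Set E2 := {x | ∀ i, x i ∈ Set.Ico (0:ℝ) 1}

/-- Normalized Lebesgue (Haar) measure of the torus, as the restriction of Lebesgue measure
to the fundamental domain. -/
def μT : Measure E2 := volume.restrict Q2

/-- The lattice `ℤ² ⊆ ℝ²`. -/
def lat : Set E2 := {v | ∀ i, ∃ k : ℤ, v i = (k : ℝ)}

/-- Distance of `x` to the lattice, i.e. the norm `|x|` on the torus. -/
def tnorm (x : E2) : ℝ := ⨅ v : lat, ‖x - (v : E2)‖

/-- `|n|²` for a Fourier mode `n ∈ ℤ²`. -/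
def nsq (n : ℤ × ℤ) : ℝ := (n.1 : ℝ)^2 + (n.2 : ℝ)^2

/-- The Fourier character `e_k(x) = exp(2πi k·x)` on the torus. -/
def ek (k : ℤ × ℤ) (x : E2) : ℂ :=
  Complex.exp (2 * Real.pi * Complex.I * ((k.1 : ℂ) * (x 0 : ℂ) + (k.2 : ℂ) * (x 1 : ℂ)))

/-!
Expanding `(∑ₙ ξₙ c(Xₙ))^K` and using the independence of `ξ` from `X`, every term factors as
`E[∏ₖ ξ_{g k}] · E[∏ₖ c(X_{g k})]`. The first factor is a product of Gaussian moments, hence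
nonnegative, and the second has modulus at most `1` when `|c| ≤ 1`; so the moments of the real
and imaginary parts of `⟨θ^N, e_k⟩` are dominated by those of `N^{-1/2} ∑ₙ ξₙ ∼ N(0,1)`, uniformly
in `N` and `k`. Hölder's inequality with the summable weights `(1+|k|²)^{-1-δ}` turns this into a
bound on `E‖θ^N‖^{2m}_{H^{-1-δ}}`, and `z^{p/2} ≤ 1 + z^m` for `m ≥ p/2` concludes.
-/

open Finset
open scoped ENNReal NNReal

lemma Fintype.prod_comp {ι κ M : Type*} [Fintype ι] [Fintype κ] [DecidableEq κ] [CommMonoid M]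
    (f : κ → M) (g : ι → κ) : ∏ a, f (g a) = ∏ b, f b ^ #{a | g a = b} := by
  rw [← prod_fiberwise_of_maps_to' (t := univ) (fun a _ => mem_univ (g a))]
  simp_rw [← prod_const]

namespace ENNReal

lemma rpow_le_one_add_rpow (z : ℝ≥0∞) {r s : ℝ} (hr : 0 ≤ r) (hrs : r ≤ s) :
    z ^ r ≤ 1 + z ^ s := by
  rcases le_total z 1 with h | h
  · exact (rpow_le_one h hr).trans le_self_add
  · exact (rpow_le_rpow_of_exponent_le h hrs).trans le_add_self

variable {ι : Type*}

lemma inner_le_weight_mul_Lp_tsum {p : ℝ} (hp : 1 ≤ p) (w f : ι → ℝ≥0∞) :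
    ∑' i, w i * f i ≤ (∑' i, w i) ^ (1 - p⁻¹) * (∑' i, w i * f i ^ p) ^ p⁻¹ := by
  have hp' : 0 ≤ 1 - p⁻¹ := sub_nonneg.2 (inv_le_one_of_one_le₀ hp)
  rw [ENNReal.tsum_eq_iSup_sum]
  refine iSup_le fun s => (inner_le_weight_mul_Lp_of_nonneg s hp w f).trans ?_
  gcongr <;> exact ENNReal.sum_le_tsum s

lemma rpow_tsum_mul_le {p : ℝ} (hp : 1 ≤ p) (w f : ι → ℝ≥0∞) :
    (∑' i, w i * f i) ^ p ≤ (∑' i, w i) ^ (p - 1) * ∑' i, w i * f i ^ p := by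
  have hp0 : p ≠ 0 := by positivity
  calc (∑' i, w i * f i) ^ p
      ≤ ((∑' i, w i) ^ (1 - p⁻¹) * (∑' i, w i * f i ^ p) ^ p⁻¹) ^ p := by
        gcongr; exact inner_le_weight_mul_Lp_tsum hp w f
    _ = (∑' i, w i) ^ (p - 1) * ∑' i, w i * f i ^ p := by
        rw [mul_rpow_of_nonneg _ _ (by positivity), ← rpow_mul, ← rpow_mul,
          inv_mul_cancel₀ hp0, rpow_one, sub_mul, one_mul, inv_mul_cancel₀ hp0]

end ENNReal

namespace MeasureTheory
variable {Ω : Type*} {mΩ : MeasurableSpace Ω} {μ : Measure Ω}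

lemma lintegral_rpow_tsum_mul_le {ι : Type*} [Countable ι] {p : ℝ} (hp : 1 ≤ p)
    (w : ι → ℝ≥0∞) {Y : ι → Ω → ℝ≥0∞} (hY : ∀ i, Measurable (Y i)) {C : ℝ≥0∞}
    (hC : ∀ i, ∫⁻ ω, Y i ω ^ p ∂μ ≤ C) :
    ∫⁻ ω, (∑' i, w i * Y i ω) ^ p ∂μ ≤ (∑' i, w i) ^ p * C := by
  have hYp : ∀ i, Measurable fun ω => w i * Y i ω ^ p := fun i => by fun_prop
  calc ∫⁻ ω, (∑' i, w i * Y i ω) ^ p ∂μ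
      ≤ ∫⁻ ω, (∑' i, w i) ^ (p - 1) * ∑' i, w i * Y i ω ^ p ∂μ :=
        lintegral_mono fun ω => ENNReal.rpow_tsum_mul_le hp w _
    _ = (∑' i, w i) ^ (p - 1) * ∑' i, w i * ∫⁻ ω, Y i ω ^ p ∂μ := by
        rw [lintegral_const_mul _ (Measurable.tsum hYp),
          lintegral_tsum fun i => (hYp i).aemeasurable]
        simp_rw [lintegral_const_mul _ ((hY _).pow_const p)]
    _ ≤ (∑' i, w i) ^ (p - 1) * ((∑' i, w i) * C) := by
        rw [← ENNReal.tsum_mul_right]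
        gcongr with i
        exact hC i
    _ = (∑' i, w i) ^ p * C := by
        rw [← mul_assoc]
        conv_rhs => rw [← sub_add_cancel p 1]
        rw [ENNReal.rpow_add_of_nonneg _ _ (by linarith) zero_le_one, ENNReal.rpow_one]

lemma integral_toReal_rpow_le [IsProbabilityMeasure μ] {F : Ω → ℝ≥0∞} (hF : Measurable F)
    {r s : ℝ} (hr : 0 ≤ r) (hrs : r ≤ s) {B : ℝ≥0∞} (hB : ∫⁻ ω, F ω ^ s ∂μ ≤ B)
    (hB_ne_top : B ≠ ∞) : ∫ ω, (F ω).toReal ^ r ∂μ ≤ 1 + B.toReal := by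
  have hFr : Measurable fun ω => (F ω).toReal ^ r := by fun_prop
  rw [integral_eq_lintegral_of_nonneg_ae (ae_of_all _ fun ω => by positivity)
    hFr.aestronglyMeasurable, ← ENNReal.toReal_one,
    ← ENNReal.toReal_add ENNReal.one_ne_top hB_ne_top]
  refine ENNReal.toReal_mono (by finiteness) ?_
  calc ∫⁻ ω, ENNReal.ofReal ((F ω).toReal ^ r) ∂μ ≤ ∫⁻ ω, (1 + F ω ^ s) ∂μ := by
        refine lintegral_mono fun ω => ?_
        rw [← ENNReal.ofReal_rpow_of_nonneg ENNReal.toReal_nonneg hr]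
        exact (ENNReal.rpow_le_rpow ENNReal.ofReal_toReal_le hr).trans
          (ENNReal.rpow_le_one_add_rpow _ hr hrs)
    _ ≤ 1 + B := by
        rw [lintegral_add_left measurable_const, lintegral_const, measure_univ, mul_one]
        gcongr

end MeasureTheory

namespace ProbabilityTheory

lemma integral_pow_gaussianReal_nonneg (v : ℝ≥0) (e : ℕ) :
    0 ≤ ∫ x, x ^ e ∂gaussianReal 0 v := by
  rcases Nat.even_or_odd e with he | he
  · exact integral_nonneg fun x => he.pow_nonneg x
  · have hsymm : ∫ x, x ^ e ∂gaussianReal 0 v = ∫ x, (-x) ^ e ∂gaussianReal 0 v := by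
      conv_lhs => rw [← neg_zero, ← gaussianReal_map_neg]
      exact integral_map (by fun_prop) (by fun_prop)
    simp only [he.neg_pow, integral_neg] at hsymm
    linarith

lemma integral_pow_gaussianReal_eq_mul (v : ℝ≥0) (m : ℕ) :
    ∫ x, x ^ (2 * m) ∂gaussianReal 0 v = (v : ℝ) ^ m * ∫ x, x ^ (2 * m) ∂gaussianReal 0 1 := by
  have hmap : (gaussianReal 0 1).map (fun x => √(v : ℝ) * x) = gaussianReal 0 v := by
    rw [gaussianReal_map_const_mul]
    congr 1
    · simp
    · ext; simp
  rw [← hmap, integral_map (by fun_prop) (by fun_prop), ← integral_const_mul]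
  simp_rw [mul_pow, pow_mul, Real.sq_sqrt v.coe_nonneg]

variable {Ω ι : Type*} {mΩ : MeasurableSpace Ω} {P : Measure Ω}

lemma memLp_of_map_eq_gaussianReal {ξ : Ω → ℝ} (hm : Measurable ξ) {μ : ℝ} {v : ℝ≥0}
    (hlaw : P.map ξ = gaussianReal μ v) {p : ℝ≥0∞} (hp : p ≠ ∞) : MemLp ξ p P := by
  have h := memLp_id_gaussianReal' (μ := μ) (v := v) p hp
  rw [← hlaw] at h
  exact (memLp_map_measure_iff aestronglyMeasurable_id hm.aemeasurable).1 h

lemma integrable_prod_of_memLp [IsFiniteMeasure P] {K : ℕ} {f : Fin K → Ω → ℝ}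
    (hf : ∀ k, MemLp (f k) K P) : Integrable (fun ω => ∏ k, f k ω) P := by
  refine (MemLp.prod' fun k _ => hf k).integrable ?_
  rw [sum_const, card_univ, Fintype.card_fin, nsmul_eq_mul]
  exact ENNReal.one_le_inv.2 (ENNReal.mul_inv_le_one _)

variable {ξ : ι → Ω → ℝ} {μ : ι → ℝ} {v : ι → ℝ≥0}

lemma iIndepFun.map_sum_eq_gaussianReal (hξ : iIndepFun ξ P) (hm : ∀ i, Measurable (ξ i))
    (hlaw : ∀ i, P.map (ξ i) = gaussianReal (μ i) (v i)) (s : Finset ι) :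
    P.map (∑ i ∈ s, ξ i) = gaussianReal (∑ i ∈ s, μ i) (∑ i ∈ s, v i) := by
  classical
  have := hξ.isProbabilityMeasure
  induction s using Finset.induction_on with
  | empty => simp [gaussianReal_zero_var, Pi.zero_def, Measure.map_const]
  | insert a s ha ih =>
    rw [sum_insert ha, sum_insert ha, sum_insert ha]
    exact gaussianReal_add_gaussianReal_of_indepFun
      (hξ.indepFun_finsetSum_of_notMem hm ha).symm (hlaw a) ih

lemma iIndepFun.integral_prod_comp_nonneg [Fintype ι] (hξ : iIndepFun ξ P)
    (hm : ∀ i, Measurable (ξ i)) (hlaw : ∀ i, P.map (ξ i) = gaussianReal 0 (v i)) {K : ℕ}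
    (g : Fin K → ι) : 0 ≤ ∫ ω, ∏ k, ξ (g k) ω ∂P := by
  classical
  simp_rw [fun ω => Fintype.prod_comp (fun i => ξ i ω) g]
  rw [hξ.integral_fun_prod_comp (f := fun i x => x ^ #{k | g k = i})
    (fun i => (hm i).aemeasurable) (fun i => by fun_prop)]
  refine prod_nonneg fun i _ => ?_
  rw [← integral_map (f := fun x => x ^ #{k | g k = i}) (hm i).aemeasurable (by fun_prop), hlaw i]
  exact integral_pow_gaussianReal_nonneg _ _

variable {β : Type*} {mβ : MeasurableSpace β}

lemma integral_sum_mul_pow_le_integral_sum_pow [Fintype ι] (hξ : iIndepFun ξ P)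
    (hm : ∀ i, Measurable (ξ i)) (hlaw : ∀ i, P.map (ξ i) = gaussianReal 0 (v i))
    {X : ι → Ω → β} (hX : ∀ i, Measurable (X i))
    (hξX : IndepFun (fun ω i => ξ i ω) (fun ω i => X i ω) P) {c : β → ℝ} (hc : Measurable c)
    (hc1 : ∀ x, ‖c x‖ ≤ 1) (K : ℕ) :
    ∫ ω, (∑ i, ξ i ω * c (X i ω)) ^ K ∂P ≤ ∫ ω, (∑ i, ξ i ω) ^ K ∂P := by
  have := hξ.isProbabilityMeasure
  have hU : ∀ g : Fin K → ι, Integrable (fun ω => ∏ k, ξ (g k) ω) P := fun g =>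
    integrable_prod_of_memLp fun k =>
      memLp_of_map_eq_gaussianReal (hm _) (hlaw _) (ENNReal.natCast_ne_top K)
  have hV : ∀ g : Fin K → ι, Measurable (fun ω => ∏ k, c (X (g k) ω)) := fun g => by
    fun_prop
  have hV1 : ∀ (g : Fin K → ι) ω, ‖∏ k, c (X (g k) ω)‖ ≤ 1 := fun g ω => by
    rw [norm_prod]
    exact prod_le_one (fun _ _ => norm_nonneg _) fun k _ => hc1 _
  have hUV : ∀ g : Fin K → ι, Integrable (fun ω => (∏ k, ξ (g k) ω) * ∏ k, c (X (g k) ω)) P :=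
    fun g => (hU g).mul_bdd (hV g).aestronglyMeasurable (ae_of_all _ (hV1 g))
  have hterm : ∀ g : Fin K → ι, ∫ ω, (∏ k, ξ (g k) ω) * ∏ k, c (X (g k) ω) ∂P
      ≤ ∫ ω, ∏ k, ξ (g k) ω ∂P := fun g => by
    have hindep : IndepFun (fun ω => ∏ k, ξ (g k) ω) (fun ω => ∏ k, c (X (g k) ω)) P :=
      hξX.comp (φ := fun x : ι → ℝ => ∏ k, x (g k)) (ψ := fun x : ι → β => ∏ k, c (x (g k)))
        (by fun_prop) (by fun_prop)
    rw [hindep.integral_fun_mul_eq_mul_integral (hU g).aestronglyMeasurable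
      (hV g).aestronglyMeasurable]
    refine mul_le_of_le_one_right (hξ.integral_prod_comp_nonneg hm hlaw g) ?_
    have hbound := norm_integral_le_of_norm_le_const (μ := P) (ae_of_all _ (hV1 g))
    rw [probReal_univ, mul_one, Real.norm_eq_abs] at hbound
    exact (le_abs_self _).trans hbound
  calc ∫ ω, (∑ i, ξ i ω * c (X i ω)) ^ K ∂P
      = ∑ g : Fin K → ι, ∫ ω, (∏ k, ξ (g k) ω) * ∏ k, c (X (g k) ω) ∂P := by
        simp_rw [Fintype.sum_pow, prod_mul_distrib]
        exact integral_finsetSum _ fun g _ => hUV g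
    _ ≤ ∑ g : Fin K → ι, ∫ ω, ∏ k, ξ (g k) ω ∂P := sum_le_sum fun g _ => hterm g
    _ = ∫ ω, (∑ i, ξ i ω) ^ K ∂P := by
        simp_rw [Fintype.sum_pow]
        exact (integral_finsetSum _ fun g _ => hU g).symm

lemma integrable_sum_mul_pow [Fintype ι] [IsFiniteMeasure P] (hm : ∀ i, Measurable (ξ i))
    (hlaw : ∀ i, P.map (ξ i) = gaussianReal 0 (v i)) {X : ι → Ω → β} (hX : ∀ i, Measurable (X i))
    {c : β → ℝ} (hc : Measurable c) (hc1 : ∀ x, ‖c x‖ ≤ 1) (K : ℕ) :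
    Integrable (fun ω => (∑ i, ξ i ω * c (X i ω)) ^ K) P := by
  have hW : MemLp (fun ω => ∑ i, ξ i ω * c (X i ω)) K P :=
    memLp_finsetSum _ fun i _ =>
      (memLp_top_of_bound (hc.comp (hX i)).aestronglyMeasurable 1 (ae_of_all _ fun _ => hc1 _)).mul'
        (memLp_of_map_eq_gaussianReal (hm i) (hlaw i) (ENNReal.natCast_ne_top K))
  exact hW.integrable_norm_pow'.mono' (hW.1.pow K) (ae_of_all _ fun ω => (norm_pow _ K).le)

lemma iIndepFun.integral_sum_pow_eq [Fintype ι] (hξ : iIndepFun ξ P) (hm : ∀ i, Measurable (ξ i))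
    (hlaw : ∀ i, P.map (ξ i) = gaussianReal 0 1) (m : ℕ) :
    ∫ ω, (∑ i, ξ i ω) ^ (2 * m) ∂P =
      (Fintype.card ι : ℝ) ^ m * ∫ x, x ^ (2 * m) ∂gaussianReal 0 1 := by
  have hsum := hξ.map_sum_eq_gaussianReal hm hlaw univ
  simp only [sum_const_zero, sum_const, card_univ, nsmul_one, Finset.sum_fn] at hsum
  have hmeas : Measurable (fun ω => ∑ i, ξ i ω) := Finset.measurable_sum _ fun i _ => hm i
  rw [← integral_map (f := fun x => x ^ (2 * m)) hmeas.aemeasurable (by fun_prop), hsum,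
    integral_pow_gaussianReal_eq_mul]
  simp

lemma integral_sum_mul_pow_le [Fintype ι] (hξ : iIndepFun ξ P) (hm : ∀ i, Measurable (ξ i))
    (hlaw : ∀ i, P.map (ξ i) = gaussianReal 0 1) {X : ι → Ω → β} (hX : ∀ i, Measurable (X i))
    (hξX : IndepFun (fun ω i => ξ i ω) (fun ω i => X i ω) P) {c : β → ℝ} (hc : Measurable c)
    (hc1 : ∀ x, ‖c x‖ ≤ 1) (m : ℕ) :
    ∫ ω, (∑ i, ξ i ω * c (X i ω)) ^ (2 * m) ∂P ≤
      (Fintype.card ι : ℝ) ^ m * ∫ x, x ^ (2 * m) ∂gaussianReal 0 1 :=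
  (integral_sum_mul_pow_le_integral_sum_pow hξ hm hlaw hX hξX hc hc1 _).trans_eq
    (hξ.integral_sum_pow_eq hm hlaw m)

lemma sq_norm_ofReal_sqrt_inv_mul_pow_le {a : ℝ} (ha : 0 ≤ a) (z : ℂ) (m : ℕ) :
    (‖((√a : ℝ) : ℂ)⁻¹ * z‖ ^ 2) ^ m ≤ a⁻¹ ^ m * 2 ^ m * (z.re ^ (2 * m) + z.im ^ (2 * m)) := by
  rw [norm_mul, mul_pow, norm_inv, Complex.norm_real, Real.norm_of_nonneg (Real.sqrt_nonneg _),
    inv_pow, Real.sq_sqrt ha, Complex.sq_norm, Complex.normSq_apply, ← sq, ← sq, mul_pow,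
    pow_mul, pow_mul, mul_assoc]
  gcongr
  exact (add_pow_le (sq_nonneg _) (sq_nonneg _) m).trans
    (by gcongr; exacts [one_le_two, Nat.sub_le m 1])

lemma lintegral_ofReal_norm_sq_pow_le [Fintype ι] (hξ : iIndepFun ξ P)
    (hm : ∀ i, Measurable (ξ i)) (hlaw : ∀ i, P.map (ξ i) = gaussianReal 0 1)
    {X : ι → Ω → β} (hX : ∀ i, Measurable (X i))
    (hξX : IndepFun (fun ω i => ξ i ω) (fun ω i => X i ω) P) {c : β → ℂ} (hc : Measurable c)
    (hc1 : ∀ x, ‖c x‖ ≤ 1) (m : ℕ) :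
    ∫⁻ ω, ENNReal.ofReal
        (‖((√(Fintype.card ι) : ℝ) : ℂ)⁻¹ * ∑ i, (ξ i ω : ℂ) * c (X i ω)‖ ^ 2) ^ m ∂P ≤
      ENNReal.ofReal (2 ^ (m + 1) * ∫ x, x ^ (2 * m) ∂gaussianReal 0 1) := by
  have := hξ.isProbabilityMeasure
  set N : ℝ := (Fintype.card ι : ℝ)
  set G : ℝ := ∫ x, x ^ (2 * m) ∂gaussianReal 0 1
  set W : (β → ℝ) → Ω → ℝ := fun d ω => (∑ i, ξ i ω * d (X i ω)) ^ (2 * m)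
  have hre : Measurable fun x => (c x).re := Complex.measurable_re.comp hc
  have him : Measurable fun x => (c x).im := Complex.measurable_im.comp hc
  have hre1 : ∀ x, ‖(c x).re‖ ≤ 1 := fun x => (Complex.abs_re_le_norm _).trans (hc1 x)
  have him1 : ∀ x, ‖(c x).im‖ ≤ 1 := fun x => (Complex.abs_im_le_norm _).trans (hc1 x)
  have hWre := integrable_sum_mul_pow hm hlaw hX hre hre1 (2 * m)
  have hWim := integrable_sum_mul_pow hm hlaw hX him him1 (2 * m)
  calc _ ≤ ∫⁻ ω, ENNReal.ofReal
          (N⁻¹ ^ m * 2 ^ m * (W (fun x => (c x).re) ω + W (fun x => (c x).im) ω)) ∂P := by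
        refine lintegral_mono fun ω => ?_
        rw [← ENNReal.ofReal_pow (sq_nonneg _)]
        refine ENNReal.ofReal_le_ofReal
          ((sq_norm_ofReal_sqrt_inv_mul_pow_le (Nat.cast_nonneg _) _ m).trans_eq ?_)
        simp [W, N, Complex.re_sum, Complex.im_sum, Complex.mul_re, Complex.mul_im]
    _ = ENNReal.ofReal (N⁻¹ ^ m * 2 ^ m *
          (∫ ω, W (fun x => (c x).re) ω ∂P + ∫ ω, W (fun x => (c x).im) ω ∂P)) := by
        rw [← integral_add hWre hWim, ← integral_const_mul]
        exact (ofReal_integral_eq_lintegral_ofReal ((hWre.add hWim).const_mul _)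
          (ae_of_all _ fun ω => by simp only [Pi.add_apply, pow_mul]; positivity)).symm
    _ ≤ ENNReal.ofReal (N⁻¹ ^ m * 2 ^ m * (N ^ m * G + N ^ m * G)) := by
        gcongr
        exacts [integral_sum_mul_pow_le hξ hm hlaw hX hξX hre hre1 m,
          integral_sum_mul_pow_le hξ hm hlaw hX hξX him him1 m]
    _ ≤ ENNReal.ofReal (2 ^ (m + 1) * G) := by
        refine ENNReal.ofReal_le_ofReal ?_
        have hN : (N⁻¹ * N) ^ m ≤ 1 :=
          pow_le_one₀ (by positivity) (inv_mul_le_one_of_le₀ le_rfl (by positivity))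
        have hG : 0 ≤ G := integral_pow_gaussianReal_nonneg 1 _
        calc N⁻¹ ^ m * 2 ^ m * (N ^ m * G + N ^ m * G) = 2 ^ (m + 1) * G * (N⁻¹ * N) ^ m := by
              ring
          _ ≤ 2 ^ (m + 1) * G := mul_le_of_le_one_right (by positivity) hN

end ProbabilityTheory

lemma summable_one_add_sq_rpow_neg {r : ℝ} (hr : 1 < 2 * r) :
    Summable fun j : ℤ => (1 + (j : ℝ) ^ 2) ^ (-r) := by
  refine Summable.of_norm_bounded_eventually (Real.summable_abs_int_rpow hr) ?_
  filter_upwards [(Set.finite_singleton (0 : ℤ)).compl_mem_cofinite] with j hj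
  have hj2 : (0 : ℝ) < (j : ℝ) ^ 2 := by
    have : (j : ℝ) ≠ 0 := Int.cast_ne_zero.2 hj
    positivity
  rw [Real.norm_of_nonneg (by positivity), neg_mul_eq_mul_neg, Real.rpow_mul (abs_nonneg _),
    Real.rpow_two, sq_abs]
  exact Real.rpow_le_rpow_of_nonpos hj2 (by linarith) (by linarith)

lemma summable_one_add_nsq_rpow {δ : ℝ} (hδ : 0 < δ) :
    Summable fun k : ℤ × ℤ => (1 + nsq k) ^ (-1 - δ) := by
  have h1 := summable_one_add_sq_rpow_neg (r := (1 + δ) / 2) (by linarith)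
  refine (h1.mul_of_nonneg h1 (fun _ => by positivity) (fun _ => by positivity)).of_nonneg_of_le
    (fun k => by unfold nsq; positivity) fun k => ?_
  rw [← Real.mul_rpow (by positivity) (by positivity), nsq,
    show -1 - δ = 2 * (-((1 + δ) / 2)) by ring, Real.rpow_mul (by positivity), Real.rpow_two]
  exact Real.rpow_le_rpow_of_nonpos (by positivity) (by nlinarith [sq_nonneg (k.1 : ℝ), sq_nonneg (k.2 : ℝ)]) (by linarith)

lemma norm_ek (k : ℤ × ℤ) (x : E2) : ‖ek k x‖ = 1 := by
  simp [ek, Complex.norm_exp, Complex.mul_re]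

lemma measurable_ek (k : ℤ × ℤ) : Measurable (ek k) := by
  unfold ek
  fun_prop

/-- uniform moment bounds for the random vortex field
`θ^N = N^{-1/2} Σ_n ξ_n δ_{X^n}` with i.i.d. `N(0,1)` intensities and i.i.d. uniform
positions, independent of each other: for all `p ≥ 1`, `δ > 0` there is `c_{p,δ}` with
`E‖θ^N‖^p_{H^{-1-δ}} ≤ c_{p,δ}`, uniformly in `N`, where
`‖θ‖²_{H^{-1-δ}} = Σ_k (1+|k|²)^{-1-δ} |⟨θ,e_k⟩|²`. -/
theorem stmt18 (p δ : ℝ) (hp : 1 ≤ p) (hδ : 0 < δ) :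
    ∃ c > (0:ℝ), ∀ (N : ℕ), 0 < N →
      ∀ (Ξ : Type) (mΞ : MeasurableSpace Ξ) (P : Measure Ξ), IsProbabilityMeasure P →
      ∀ (ξ : Fin N → Ξ → ℝ) (X : Fin N → Ξ → E2),
      (∀ n, Measurable (ξ n)) → (∀ n, Measurable (X n)) →
      iIndepFun ξ P →
      (∀ n, Measure.map (ξ n) P = gaussianReal 0 1) →
      iIndepFun X P →
      (∀ n, Measure.map (X n) P = μT) →
      IndepFun (fun ω => fun n => ξ n ω) (fun ω => fun n => X n ω) P →
      ∫ ω, (∑' k : ℤ × ℤ, (1 + nsq k) ^ (-1 - δ) *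
          ‖((Real.sqrt N : ℝ) : ℂ)⁻¹ * ∑ n, (ξ n ω : ℂ) * ek k (X n ω)‖ ^ 2)
        ^ (p / 2) ∂P ≤ c := by
  set m := ⌈p / 2⌉₊
  have hm : (1 : ℝ) ≤ m := by exact_mod_cast Nat.one_le_iff_ne_zero.2 (by positivity)
  set w : ℤ × ℤ → ℝ≥0∞ := fun k => ENNReal.ofReal ((1 + nsq k) ^ (-1 - δ))
  have hw : ∑' k, w k ≠ ∞ := by
    rw [← ENNReal.ofReal_tsum_of_nonneg (fun k => by unfold nsq; positivity)
      (summable_one_add_nsq_rpow hδ)]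
    exact ENNReal.ofReal_ne_top
  set B := (∑' k, w k) ^ (m : ℝ) *
    ENNReal.ofReal (2 ^ (m + 1) * ∫ x, x ^ (2 * m) ∂gaussianReal 0 1)
  refine ⟨1 + B.toReal, by positivity, fun N _ Ξ _ P _ ξ X hξ hX hξi hξlaw _ _ hξX => ?_⟩
  set Y : ℤ × ℤ → Ξ → ℝ≥0∞ := fun k ω =>
    ENNReal.ofReal (‖((Real.sqrt N : ℝ) : ℂ)⁻¹ * ∑ n, (ξ n ω : ℂ) * ek k (X n ω)‖ ^ 2)
  have hY : ∀ k, Measurable (Y k) := fun k => by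
    have := measurable_ek k
    fun_prop
  have hYm : ∀ k, ∫⁻ ω, Y k ω ^ (m : ℝ) ∂P ≤
      ENNReal.ofReal (2 ^ (m + 1) * ∫ x, x ^ (2 * m) ∂gaussianReal 0 1) := fun k => by
    simpa only [ENNReal.rpow_natCast, Fintype.card_fin] using
      lintegral_ofReal_norm_sq_pow_le hξi hξ hξlaw hX hξX (measurable_ek k)
        (fun x => (norm_ek k x).le) m
  have hsum : ∀ ω, ∑' k : ℤ × ℤ, (1 + nsq k) ^ (-1 - δ) *
      ‖((Real.sqrt N : ℝ) : ℂ)⁻¹ * ∑ n, (ξ n ω : ℂ) * ek k (X n ω)‖ ^ 2 =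
      (∑' k, w k * Y k ω).toReal := fun ω => by
    rw [ENNReal.tsum_toReal_eq fun k => by finiteness]
    refine tsum_congr fun k => ?_
    rw [← ENNReal.ofReal_mul (by unfold nsq; positivity),
      ENNReal.toReal_ofReal (by unfold nsq; positivity)]
  simp_rw [hsum]
  exact integral_toReal_rpow_le (by fun_prop) (by positivity) (Nat.le_ceil _)
    (lintegral_rpow_tsum_mul_le hm w hY hYm) (by finiteness)
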